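/- arXiv:1502.01212 — 9 statements merged into one kernel-verified Lean document; each statement's English description precedes it below -/
import Mathlib

section
/- Fix an integer r ≥ 3 and set m = ⌈(r+1)/2⌉. Let A, B, C be nonempty subsets of {1,...,r} with |A| ≥ |B| ≥ |C|, |A| > m, and |B| ≥ m. Set x = |A| − m and y = |B| − m. If |C| ≥ max{m − x − y, 1} when r is even, or |C| ≥ max{m − x − y + 2, 1} when r is odd, then there exists a violating triple (a,b,c) ∈ A × B × C. -/
def ViolatingTriple (i j k : ℕ) : Prop :=
  ¬ (i ≤ j + k ∧ j ≤ i + k ∧ k ≤ i + j)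

theorem stmt_3 (r m : ℕ) (hr : 3 ≤ r) (hm : m = (r + 2) / 2)
    (A B C : Finset ℕ)
    (hA : A ⊆ Finset.Icc 1 r) (hB : B ⊆ Finset.Icc 1 r) (hC : C ⊆ Finset.Icc 1 r)
    (hAne : A.Nonempty) (hBne : B.Nonempty) (hCne : C.Nonempty)
    (hAB : B.card ≤ A.card) (hBC : C.card ≤ B.card)
    (hAm : m < A.card) (hBm : m ≤ B.card)
    (x y : ℕ) (hx : x = A.card - m) (hy : y = B.card - m)
    (hCcard : if Even r then max (m - x - y) 1 ≤ C.card
      else max (m - x - y + 2) 1 ≤ C.card) :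
    ∃ a ∈ A, ∃ b ∈ B, ∃ c ∈ C, ViolatingTriple a b c := by
  by_contra hcon
  push_neg at hcon
  simp only [ViolatingTriple, not_not] at hcon
  set a1 := A.min' hAne with ha1def
  set a2 := A.max' hAne with ha2def
  set b1 := B.min' hBne with hb1def
  set b2 := B.max' hBne with hb2def
  set c1 := C.min' hCne with hc1def
  set c2 := C.max' hCne with hc2def
  have ha1A : a1 ∈ A := A.min'_mem hAne
  have ha2A : a2 ∈ A := A.max'_mem hAne
  have hb1B : b1 ∈ B := B.min'_mem hBne
  have hb2B : b2 ∈ B := B.max'_mem hBne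
  have hc1C : c1 ∈ C := C.min'_mem hCne
  have hc2C : c2 ∈ C := C.max'_mem hCne
  have ha1r : 1 ≤ a1 := (Finset.mem_Icc.mp (hA ha1A)).1
  have ha2r : a2 ≤ r := (Finset.mem_Icc.mp (hA ha2A)).2
  have hb1r : 1 ≤ b1 := (Finset.mem_Icc.mp (hB hb1B)).1
  have hc1r : 1 ≤ c1 := (Finset.mem_Icc.mp (hC hc1C)).1
  have hcardA : A.card ≤ a2 + 1 - a1 := by
    calc A.card ≤ (Finset.Icc a1 a2).card :=
          Finset.card_le_card (fun z hz =>
            Finset.mem_Icc.mpr ⟨A.min'_le z hz, A.le_max' z hz⟩)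
      _ = a2 + 1 - a1 := Nat.card_Icc _ _
  have hcardB : B.card ≤ b2 + 1 - b1 := by
    calc B.card ≤ (Finset.Icc b1 b2).card :=
          Finset.card_le_card (fun z hz =>
            Finset.mem_Icc.mpr ⟨B.min'_le z hz, B.le_max' z hz⟩)
      _ = b2 + 1 - b1 := Nat.card_Icc _ _
  have hcardC : C.card ≤ c2 + 1 - c1 := by
    calc C.card ≤ (Finset.Icc c1 c2).card :=
          Finset.card_le_card (fun z hz =>
            Finset.mem_Icc.mpr ⟨C.min'_le z hz, C.le_max' z hz⟩)
      _ = c2 + 1 - c1 := Nat.card_Icc _ _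
  have h1 : b2 ≤ a1 + c1 := (hcon a1 ha1A b2 hb2B c1 hc1C).2.1
  have h2 : c2 ≤ a1 + b1 := (hcon a1 ha1A b1 hb1B c2 hc2C).2.2
  have hb12 : b1 ≤ b2 := B.min'_le _ hb2B
  have hc12 : c1 ≤ c2 := C.min'_le _ hc2C
  have ha12 : a1 ≤ a2 := A.min'_le _ ha2A
  rcases Nat.even_or_odd r with he | ho
  · rw [if_pos he] at hCcard
    obtain ⟨k, hk⟩ := he
    omega
  · rw [if_neg (Nat.not_even_iff_odd.mpr ho)] at hCcard
    obtain ⟨k, hk⟩ := ho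
    omega
end

section
/- For every integer r ≥ 3, every metric subset of {1,...,r} has size at most ⌈(r+1)/2⌉. -/
theorem stmt_4 (r : ℕ) (hr : 3 ≤ r) (A : Finset ℕ) (hA : A ⊆ Finset.Icc 1 r)
    (hmetric : ∀ a ∈ A, ∀ b ∈ A, ∀ c ∈ A, ¬ ViolatingTriple a b c) :
    A.card ≤ (r + 2) / 2 := by
  rcases A.eq_empty_or_nonempty with h | h
  · simp [h]
  set m := A.min' h with hm
  have hmA : m ∈ A := A.min'_mem h
  have hm1 : 1 ≤ m := by
    have := hA hmA
    simp [Finset.mem_Icc] at this; exact this.1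
  have hsub : A ⊆ Finset.Icc m (min (2 * m) r) := by
    intro a ha
    have h1 : m ≤ a := A.min'_le a ha
    have h2 : a ≤ r := by
      have := hA ha; simp [Finset.mem_Icc] at this; exact this.2
    have h3 : ¬ ViolatingTriple a m m := hmetric a ha m hmA m hmA
    unfold ViolatingTriple at h3
    push_neg at h3
    simp [Finset.mem_Icc]
    omega
  have hcard : A.card ≤ (Finset.Icc m (min (2 * m) r)).card :=
    Finset.card_le_card hsub
  rw [Nat.card_Icc] at hcard
  rcases le_or_gt (2 * m) r with h2 | h2
  · rw [min_eq_left h2] at hcard; omega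
  · rw [min_eq_right h2.le] at hcard; omega
end

section
/- Let r ≥ 3 be an integer, set m = ⌈(r+1)/2⌉, and suppose A, B, C ⊆ {1,...,r} satisfy |A| = |B| = |C| = m and there is no violating triple (a,b,c) ∈ A × B × C. Then either (1) r is even and A = B = C = {m−1, m, ..., r}, or (2) r is odd and, after some relabeling {A,B,C} = {D,E,F}, either D = E = F = {m−1, ..., r−1}, or D = F = {m, ..., r} and E ⊆ {m−1, ..., r}. -/
lemma minmax_aux (r m : ℕ) (X : Finset ℕ) (hX : X ⊆ Finset.Icc 1 r)
    (hc : X.card = m) (hm : 0 < m) :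
    ∃ x₀ ∈ X, ∃ x₁ ∈ X, (∀ x ∈ X, x₀ ≤ x ∧ x ≤ x₁) ∧ x₀ + m ≤ x₁ + 1 ∧ 1 ≤ x₀ ∧ x₁ ≤ r := by
  have hne : X.Nonempty := Finset.card_pos.mp (by omega)
  refine ⟨X.min' hne, X.min'_mem hne, X.max' hne, X.max'_mem hne,
    fun x hx => ⟨X.min'_le x hx, X.le_max' x hx⟩, ?_, ?_, ?_⟩
  · have hsub : X ⊆ Finset.Icc (X.min' hne) (X.max' hne) := fun x hx =>
      Finset.mem_Icc.mpr ⟨X.min'_le x hx, X.le_max' x hx⟩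
    have := Finset.card_le_card hsub
    rw [Nat.card_Icc] at this
    omega
  · exact (Finset.mem_Icc.mp (hX (X.min'_mem hne))).1
  · exact (Finset.mem_Icc.mp (hX (X.max'_mem hne))).2

theorem stmt_5 (r m : ℕ) (hr : 3 ≤ r) (hm : m = (r + 2) / 2)
    (A B C : Finset ℕ)
    (hA : A ⊆ Finset.Icc 1 r) (hB : B ⊆ Finset.Icc 1 r) (hC : C ⊆ Finset.Icc 1 r)
    (hcard : A.card = m ∧ B.card = m ∧ C.card = m)
    (hmetric : ∀ a ∈ A, ∀ b ∈ B, ∀ c ∈ C, ¬ ViolatingTriple a b c) :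
    (Even r ∧ A = Finset.Icc (m - 1) r ∧ B = Finset.Icc (m - 1) r ∧ C = Finset.Icc (m - 1) r) ∨
    (Odd r ∧ ∃ D E F : Finset ℕ, ({A, B, C} : Multiset (Finset ℕ)) = {D, E, F} ∧
      ((D = Finset.Icc (m - 1) (r - 1) ∧ E = Finset.Icc (m - 1) (r - 1) ∧
          F = Finset.Icc (m - 1) (r - 1)) ∨
        (D = Finset.Icc m r ∧ F = Finset.Icc m r ∧ E ⊆ Finset.Icc (m - 1) r))) := by
  obtain ⟨hcA, hcB, hcC⟩ := hcard
  have hmpos : 0 < m := by omega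
  obtain ⟨a₀, ha₀, a₁, ha₁, hAb, hAc, hA1, hAr⟩ := minmax_aux r m A hA hcA hmpos
  obtain ⟨b₀, hb₀, b₁, hb₁, hBb, hBc, hB1, hBr⟩ := minmax_aux r m B hB hcB hmpos
  obtain ⟨c₀, hc₀, c₁, hc₁, hCb, hCc, hC1, hCr⟩ := minmax_aux r m C hC hcC hmpos
  have h1 : a₁ ≤ b₀ + c₀ := by
    have := hmetric a₁ ha₁ b₀ hb₀ c₀ hc₀
    rw [ViolatingTriple, not_not] at this
    exact this.1
  have h2 : b₁ ≤ a₀ + c₀ := by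
    have := hmetric a₀ ha₀ b₁ hb₁ c₀ hc₀
    rw [ViolatingTriple, not_not] at this
    exact this.2.1
  have h3 : c₁ ≤ a₀ + b₀ := by
    have := hmetric a₀ ha₀ b₀ hb₀ c₁ hc₁
    rw [ViolatingTriple, not_not] at this
    exact this.2.2
  have hlo : m - 1 ≤ a₀ ∧ m - 1 ≤ b₀ ∧ m - 1 ≤ c₀ := by omega
  have hAS : A ⊆ Finset.Icc (m - 1) r := fun x hx =>
    Finset.mem_Icc.mpr ⟨le_trans hlo.1 (hAb x hx).1, le_trans (hAb x hx).2 hAr⟩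
  have hBS : B ⊆ Finset.Icc (m - 1) r := fun x hx =>
    Finset.mem_Icc.mpr ⟨le_trans hlo.2.1 (hBb x hx).1, le_trans (hBb x hx).2 hBr⟩
  have hCS : C ⊆ Finset.Icc (m - 1) r := fun x hx =>
    Finset.mem_Icc.mpr ⟨le_trans hlo.2.2 (hCb x hx).1, le_trans (hCb x hx).2 hCr⟩
  rcases Nat.even_or_odd r with he | ho
  · -- even case
    left
    obtain ⟨k, hk⟩ := id he
    have hcardS : (Finset.Icc (m - 1) r).card = m := by
      rw [Nat.card_Icc]; omega
    exact ⟨he, Finset.eq_of_subset_of_card_le hAS (by omega),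
      Finset.eq_of_subset_of_card_le hBS (by omega),
      Finset.eq_of_subset_of_card_le hCS (by omega)⟩
  · -- odd case
    right
    obtain ⟨k, hk⟩ := id ho
    have hrm : r = 2 * m - 1 := by omega
    -- violating triple facts
    have hv1 : r ∈ A → (m - 1) ∈ B → (m - 1) ∈ C → False := by
      intro h1 h2 h3
      have := hmetric r h1 (m - 1) h2 (m - 1) h3
      rw [ViolatingTriple, not_not] at this
      omega
    have hv2 : (m - 1) ∈ A → r ∈ B → (m - 1) ∈ C → False := by
      intro h1 h2 h3
      have := hmetric (m - 1) h1 r h2 (m - 1) h3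
      rw [ViolatingTriple, not_not] at this
      omega
    have hv3 : (m - 1) ∈ A → (m - 1) ∈ B → r ∈ C → False := by
      intro h1 h2 h3
      have := hmetric (m - 1) h1 (m - 1) h2 r h3
      rw [ViolatingTriple, not_not] at this
      omega
    have hmiss : ∀ X : Finset ℕ, X ⊆ Finset.Icc (m - 1) r → X.card = m →
        (m - 1) ∉ X → X = Finset.Icc m r := by
      intro X hXS hXc hXt
      refine Finset.eq_of_subset_of_card_le (fun x hx => ?_) (by rw [Nat.card_Icc]; omega)
      have h := Finset.mem_Icc.mp (hXS hx)
      have : x ≠ m - 1 := fun h' => hXt (h' ▸ hx)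
      exact Finset.mem_Icc.mpr ⟨by omega, h.2⟩
    have hmiss' : ∀ X : Finset ℕ, X ⊆ Finset.Icc (m - 1) r → X.card = m →
        r ∉ X → X = Finset.Icc (m - 1) (r - 1) := by
      intro X hXS hXc hXr
      refine Finset.eq_of_subset_of_card_le (fun x hx => ?_) (by rw [Nat.card_Icc]; omega)
      have h := Finset.mem_Icc.mp (hXS hx)
      have : x ≠ r := fun h' => hXr (h' ▸ hx)
      exact Finset.mem_Icc.mpr ⟨h.1, by omega⟩
    have hrmem : r ∈ Finset.Icc m r := Finset.mem_Icc.mpr ⟨by omega, le_rfl⟩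
    by_cases htA : (m - 1) ∈ A
    · by_cases htB : (m - 1) ∈ B
      · by_cases htC : (m - 1) ∈ C
        · -- all contain m-1, so none contains r
          have hrA : r ∉ A := fun h => hv1 h htB htC
          have hrB : r ∉ B := fun h => hv2 htA h htC
          have hrC : r ∉ C := fun h => hv3 htA htB h
          exact ⟨ho, A, B, C, rfl, Or.inl ⟨hmiss' A hAS hcA hrA,
            hmiss' B hBS hcB hrB, hmiss' C hCS hcC hrC⟩⟩
        · -- m-1 ∉ C: C = Icc m r contains r, contradiction
          have hC' := hmiss C hCS hcC htC
          exact absurd (hC' ▸ hrmem) (fun h => hv3 htA htB h)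
      · -- m-1 ∉ B: B = Icc m r, then m-1 ∉ C, C = Icc m r
        have hB' := hmiss B hBS hcB htB
        have hrB : r ∈ B := hB' ▸ hrmem
        have htC : (m - 1) ∉ C := fun h => hv2 htA hrB h
        have hC' := hmiss C hCS hcC htC
        refine ⟨ho, B, A, C, ?_, Or.inr ⟨hB', hC', hAS⟩⟩
        show (A ::ₘ B ::ₘ {C}) = (B ::ₘ A ::ₘ {C})
        rw [Multiset.cons_swap]
    · -- m-1 ∉ A: A = Icc m r
      have hA' := hmiss A hAS hcA htA
      have hrA : r ∈ A := hA' ▸ hrmem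
      by_cases htB : (m - 1) ∈ B
      · have htC : (m - 1) ∉ C := fun h => hv1 hrA htB h
        have hC' := hmiss C hCS hcC htC
        exact ⟨ho, A, B, C, rfl, Or.inr ⟨hA', hC', hBS⟩⟩
      · have hB' := hmiss B hBS hcB htB
        refine ⟨ho, A, C, B, ?_, Or.inr ⟨hA', hB', hCS⟩⟩
        show (A ::ₘ B ::ₘ {C}) = (A ::ₘ C ::ₘ {B})
        exact congrArg (A ::ₘ ·) (Multiset.pair_comm B C)
end

section
/- Let r ≥ 3 and m = ⌈(r+1)/2⌉. Suppose A, B, C are nonempty subsets of {1,...,r} such that no triple in A × B × C is violating, and |A| ≥ |B| > m. Then |C| < m, and moreover |A|·|C| ≤ m² − 1 and |B|·|C| ≤ m² − 1. -/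
theorem stmt_6 (r m : ℕ) (hr : 3 ≤ r) (hm : m = (r + 2) / 2)
    (A B C : Finset ℕ)
    (hA : A ⊆ Finset.Icc 1 r) (hB : B ⊆ Finset.Icc 1 r) (hC : C ⊆ Finset.Icc 1 r)
    (hAne : A.Nonempty) (hBne : B.Nonempty) (hCne : C.Nonempty)
    (hmetric : ∀ a ∈ A, ∀ b ∈ B, ∀ c ∈ C, ¬ ViolatingTriple a b c)
    (hAB : B.card ≤ A.card) (hBm : m < B.card) :
    C.card < m ∧ A.card * C.card ≤ m ^ 2 - 1 ∧ B.card * C.card ≤ m ^ 2 - 1 := by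
  set a0 := A.min' hAne with ha0
  set aM := A.max' hAne with haM
  set b0 := B.min' hBne with hb0
  have ha0A : a0 ∈ A := A.min'_mem hAne
  have haMA : aM ∈ A := A.max'_mem hAne
  have hb0B : b0 ∈ B := B.min'_mem hBne
  have ha0r := Finset.mem_Icc.mp (hA ha0A)
  have haMr := Finset.mem_Icc.mp (hA haMA)
  have hb0r := Finset.mem_Icc.mp (hB hb0B)
  -- C ⊆ Icc (aM - b0) (a0 + b0)
  have hCsub : C ⊆ Finset.Icc (aM - b0) (a0 + b0) := by
    intro c hc
    have h1 := hmetric aM haMA b0 hb0B c hc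
    have h2 := hmetric a0 ha0A b0 hb0B c hc
    simp only [ViolatingTriple, not_not] at h1 h2
    exact Finset.mem_Icc.mpr ⟨by omega, by omega⟩
  have hCcard : C.card ≤ (a0 + b0) + 1 - (aM - b0) := by
    calc C.card ≤ (Finset.Icc (aM - b0) (a0 + b0)).card := Finset.card_le_card hCsub
    _ = (a0 + b0) + 1 - (aM - b0) := by rw [Nat.card_Icc]
  have hAcard : A.card ≤ aM + 1 - a0 := by
    calc A.card ≤ (Finset.Icc a0 aM).card := by
          apply Finset.card_le_card
          intro a ha
          exact Finset.mem_Icc.mpr ⟨A.min'_le a ha, A.le_max' a ha⟩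
    _ = aM + 1 - a0 := by rw [Nat.card_Icc]
  have hBcard : B.card ≤ r + 1 - b0 := by
    calc B.card ≤ (Finset.Icc b0 r).card := by
          apply Finset.card_le_card
          intro b hb
          exact Finset.mem_Icc.mpr ⟨B.min'_le b hb, (Finset.mem_Icc.mp (hB hb)).2⟩
    _ = r + 1 - b0 := by rw [Nat.card_Icc]
  have ha0aM : a0 ≤ aM := A.min'_le aM haMA
  -- key linear bound
  have hkey : C.card + A.card ≤ 2 * m := by omega
  have hxm : m + 1 ≤ A.card := le_trans hBm hAB
  have hCm : C.card < m := by omega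
  have hm2 : 1 ≤ m := by omega
  have hAC : A.card * C.card ≤ m ^ 2 - 1 := by
    have h : (A.card : ℤ) * C.card ≤ (m : ℤ) ^ 2 - 1 := by
      have h1 : (C.card : ℤ) + A.card ≤ 2 * m := by exact_mod_cast hkey
      have h2 : (m : ℤ) + 1 ≤ A.card := by exact_mod_cast hxm
      nlinarith [sq_nonneg ((A.card : ℤ) - m - 1)]
    have hm1 : 1 ≤ m ^ 2 := Nat.one_le_pow _ _ (by omega)
    exact_mod_cast by
      have : ((m : ℤ) ^ 2 - 1 : ℤ) = ((m ^ 2 - 1 : ℕ) : ℤ) := by push_cast [hm1]; ring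
      omega
  exact ⟨hCm, hAC, le_trans (Nat.mul_le_mul_right _ hAB) hAC⟩
end

section
/- Let r, t ≥ 3 be integers, m = ⌈(r+1)/2⌉, and let c : E → (nonempty subsets of {1,...,r}) be a coloring of the edge set E of the complete graph on {1,...,t} such that for all triples of distinct vertices u, v, w there is no violating triple (a,b,c') ∈ c(uv) × c(vw) × c(uw). Define f(e) = |c(e)|, W = ∏_{e ∈ E} f(e), and a = |{e ∈ E : f(e) > m}|. Then W ≤ m^{C(t,2) + t + 5} · ((m² − 1)/m²)^a. -/
open Finset

theorem succ_choose_two (n : ℕ) : (n + 1).choose 2 = n.choose 2 + n := by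
  simp [Nat.choose_succ_succ', add_comm]

section AscendingPairs

variable {α : Type*} [LinearOrder α]

def ascendingPairs (s : Finset α) : Finset (α × α) :=
  (s ×ˢ s).filter fun p => p.1 < p.2

theorem mem_ascendingPairs {s : Finset α} {p : α × α} :
    p ∈ ascendingPairs s ↔ p.1 ∈ s ∧ p.2 ∈ s ∧ p.1 < p.2 := by
  simp [ascendingPairs, and_assoc]

theorem prod_ascendingPairs_insert {M : Type*} [CommMonoid M] {f : α → α → M}
    (hf : ∀ x y, f x y = f y x) {a : α} {s : Finset α} (ha : a ∉ s) :
    ∏ p ∈ ascendingPairs (insert a s), f p.1 p.2 =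
      (∏ p ∈ ascendingPairs s, f p.1 p.2) * ∏ x ∈ s, f a x := by
  have hsub : ascendingPairs s ⊆ ascendingPairs (insert a s) :=
    filter_subset_filter _ (product_subset_product (subset_insert a s) (subset_insert a s))
  rw [← prod_sdiff hsub, mul_comm]
  congr 1
  refine prod_nbij' (fun p => if p.1 = a then p.2 else p.1) (fun x => (min a x, max a x))
    ?_ ?_ ?_ ?_ ?_ <;> simp only [mem_sdiff, mem_ascendingPairs, mem_insert] <;> grind

variable {g : α → α → ℝ} {m : ℝ}

theorem prod_ascendingPairs_insert_le (hg : ∀ x y, 0 ≤ g x y) (hsymm : ∀ x y, g x y = g y x)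
    (hm : 1 ≤ m) {a : α} {s : Finset α} (ha : a ∉ s)
    (hs : ∏ p ∈ ascendingPairs s, g p.1 p.2 ≤ m ^ ((#s).choose 2 + #s))
    (hsmall : ∀ x ∈ s, g a x ≤ m) :
    ∏ p ∈ ascendingPairs (insert a s), g p.1 p.2 ≤
      m ^ ((#(insert a s)).choose 2 + #(insert a s)) := by
  rw [prod_ascendingPairs_insert hsymm ha, card_insert_of_notMem ha]
  calc (∏ p ∈ ascendingPairs s, g p.1 p.2) * ∏ x ∈ s, g a x
      ≤ m ^ ((#s).choose 2 + #s) * m ^ #s := by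
        gcongr
        · exact prod_nonneg fun p _ => hg _ _
        · exact (prod_le_prod (fun x _ => hg _ _) hsmall).trans_eq (prod_const m)
    _ ≤ m ^ ((#s + 1).choose 2 + (#s + 1)) := by
        rw [← pow_add]
        exact pow_le_pow_right₀ hm (by rw [succ_choose_two]; omega)

theorem prod_ascendingPairs_insert_insert_le (hg : ∀ x y, 0 ≤ g x y)
    (hsymm : ∀ x y, g x y = g y x) (hm : 1 ≤ m) {a b : α} {s : Finset α} (hab : a ≠ b)
    (ha : a ∉ s) (hb : b ∉ s)
    (hs : ∏ p ∈ ascendingPairs s, g p.1 p.2 ≤ m ^ ((#s).choose 2 + #s))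
    (hcube : g a b ≤ m ^ 3) (hpair : ∀ x ∈ s, g a x * g b x ≤ m ^ 2) :
    ∏ p ∈ ascendingPairs (insert a (insert b s)), g p.1 p.2 ≤
      m ^ ((#(insert a (insert b s))).choose 2 + #(insert a (insert b s))) := by
  have ha' : a ∉ insert b s := by simp [hab, ha]
  rw [prod_ascendingPairs_insert hsymm ha', prod_ascendingPairs_insert hsymm hb, prod_insert hb,
    card_insert_of_notMem ha', card_insert_of_notMem hb]
  calc (∏ p ∈ ascendingPairs s, g p.1 p.2) * (∏ x ∈ s, g b x) * (g a b * ∏ x ∈ s, g a x)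
      = (∏ p ∈ ascendingPairs s, g p.1 p.2) * g a b * ∏ x ∈ s, g a x * g b x := by
        rw [prod_mul_distrib]; ring
    _ ≤ m ^ ((#s).choose 2 + #s) * m ^ 3 * (m ^ 2) ^ #s := by
        have hpairs := prod_nonneg fun p (_ : p ∈ ascendingPairs s) => hg p.1 p.2
        have hcross := (prod_le_prod (fun x _ => mul_nonneg (hg a x) (hg b x)) hpair).trans_eq
          (prod_const (m ^ 2))
        gcongr
        · exact prod_nonneg fun x _ => mul_nonneg (hg a x) (hg b x)
        · exact hg a b
    _ = m ^ ((#s + 1 + 1).choose 2 + (#s + 1 + 1)) := by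
        rw [← pow_mul, ← pow_add, ← pow_add]
        rw [succ_choose_two, succ_choose_two]
        ring_nf

theorem prod_ascendingPairs_le (hg : ∀ x y, 0 ≤ g x y) (hsymm : ∀ x y, g x y = g y x)
    (hm : 1 ≤ m) (hcube : ∀ x y, x ≠ y → g x y ≤ m ^ 3)
    (htri : ∀ x y z, x ≠ y → x ≠ z → y ≠ z → m < g x y → g x z * g y z ≤ m ^ 2)
    (S : Finset α) :
    ∏ p ∈ ascendingPairs S, g p.1 p.2 ≤ m ^ ((#S).choose 2 + #S) := by
  induction S using Finset.strongInduction with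
  | H S ih =>
  obtain rfl | ⟨a, haS⟩ := S.eq_empty_or_nonempty
  · simp [ascendingPairs]
  rw [← insert_erase haS]
  by_cases hbig : ∃ b ∈ S.erase a, m < g a b
  · obtain ⟨b, hb, hab⟩ := hbig
    have hba : b ≠ a := ne_of_mem_erase hb
    rw [← insert_erase hb]
    refine prod_ascendingPairs_insert_insert_le hg hsymm hm hba.symm
      (fun h => notMem_erase a S (mem_of_mem_erase h)) (notMem_erase b _)
      (ih _ ((erase_subset b _).trans_ssubset (erase_ssubset haS))) (hcube a b hba.symm)
      fun x hx => htri a b x hba.symm ?_ ?_ hab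
    · exact (ne_of_mem_erase (mem_of_mem_erase hx)).symm
    · exact (ne_of_mem_erase hx).symm
  · push Not at hbig
    exact prod_ascendingPairs_insert_le hg hsymm hm (notMem_erase a S)
      (ih _ (erase_ssubset haS)) hbig

end AscendingPairs

section Weight

noncomputable def weight (m x : ℕ) : ℝ :=
  x * if m < x then (m : ℝ) ^ 2 / ((m : ℝ) ^ 2 - 1) else 1

variable {m : ℕ}

theorem weight_nonneg (m x : ℕ) : 0 ≤ weight m x := by
  unfold weight
  split_ifs
  · rcases Nat.eq_zero_or_pos m with rfl | hm
    · simp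
    · have : (1 : ℝ) ≤ m := by exact_mod_cast hm
      have : (0 : ℝ) ≤ (m : ℝ) ^ 2 - 1 := by nlinarith
      positivity
  · positivity

theorem lt_of_lt_weight {x : ℕ} (h : (m : ℝ) < weight m x) : m < x := by
  by_contra hx
  rw [weight, if_neg hx, mul_one] at h
  exact hx (by exact_mod_cast h)

theorem weight_le_cube (hm : 2 ≤ m) {x : ℕ} (hx : x < 2 * m) : weight m x ≤ (m : ℝ) ^ 3 := by
  have hmR : (2 : ℝ) ≤ m := by exact_mod_cast hm
  unfold weight
  split_ifs with hmx
  · have hxR : (x : ℝ) ≤ 2 * m - 1 := by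
      have : (x : ℝ) + 1 ≤ 2 * m := by exact_mod_cast hx
      linarith
    have : 2 * (m : ℝ) - 1 ≤ m * ((m : ℝ) ^ 2 - 1) := by nlinarith
    rw [mul_div_assoc', div_le_iff₀ (by nlinarith)]
    calc (x : ℝ) * (m : ℝ) ^ 2 ≤ (m * ((m : ℝ) ^ 2 - 1)) * (m : ℝ) ^ 2 := by gcongr; linarith
      _ = (m : ℝ) ^ 3 * ((m : ℝ) ^ 2 - 1) := by ring
  · have : (x : ℝ) ≤ m := by exact_mod_cast not_lt.1 hmx
    rw [mul_one]
    exact this.trans (le_self_pow₀ (by linarith) (by norm_num))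

theorem weight_mul_weight_le_of_le_of_lt (hm : 2 ≤ m) {x y : ℕ} (hx : x ≤ m) (hy : m < y)
    (hxy : x + y ≤ 2 * m) : weight m x * weight m y ≤ (m : ℝ) ^ 2 := by
  have hden : (0 : ℝ) < (m : ℝ) ^ 2 - 1 := by
    have : (2 : ℝ) ≤ m := by exact_mod_cast hm
    nlinarith
  have hprod : x * y + 1 ≤ m ^ 2 := by
    obtain ⟨d, rfl⟩ := Nat.exists_eq_add_of_lt hy
    nlinarith
  have hprodR : (x : ℝ) * y ≤ (m : ℝ) ^ 2 - 1 := by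
    have : ((x * y + 1 : ℕ) : ℝ) ≤ ((m ^ 2 : ℕ) : ℝ) := by exact_mod_cast hprod
    push_cast at this
    linarith
  rw [weight, weight, if_neg (not_lt.2 hx), if_pos hy]
  calc (x : ℝ) * 1 * (y * ((m : ℝ) ^ 2 / ((m : ℝ) ^ 2 - 1)))
      = x * y * ((m : ℝ) ^ 2 / ((m : ℝ) ^ 2 - 1)) := by ring
    _ ≤ ((m : ℝ) ^ 2 - 1) * ((m : ℝ) ^ 2 / ((m : ℝ) ^ 2 - 1)) := by gcongr
    _ = (m : ℝ) ^ 2 := by field_simp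

theorem weight_mul_weight_le (hm : 2 ≤ m) {x y : ℕ} (hxy : x + y ≤ 2 * m) :
    weight m x * weight m y ≤ (m : ℝ) ^ 2 := by
  rcases le_or_gt x m with hx | hx <;> rcases le_or_gt y m with hy | hy
  · rw [weight, weight, if_neg (not_lt.2 hx), if_neg (not_lt.2 hy), mul_one, mul_one, sq]
    gcongr
  · exact weight_mul_weight_le_of_le_of_lt hm hx hy hxy
  · rw [mul_comm]
    exact weight_mul_weight_le_of_le_of_lt hm hy hx (by omega)
  · omega

theorem prod_weight {ι : Type*} (s : Finset ι) (f : ι → ℕ) :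
    ∏ i ∈ s, weight m (f i) =
      (∏ i ∈ s, (f i : ℝ)) * ((m : ℝ) ^ 2 / ((m : ℝ) ^ 2 - 1)) ^ #(s.filter (m < f ·)) := by
  simp only [weight, prod_mul_distrib, prod_ite, prod_const, one_pow, mul_one]

end Weight

theorem card_add_min'_le_max' {s : Finset ℕ} (hs : s.Nonempty) :
    #s + s.min' hs ≤ s.max' hs + 1 := by
  have hsub : s ⊆ Icc (s.min' hs) (s.max' hs) := fun x hx =>
    mem_Icc.2 ⟨min'_le s x hx, le_max' s x hx⟩
  have := card_le_card hsub
  have := min'_le s _ (max'_mem s hs)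
  rw [Nat.card_Icc] at *
  omega

theorem card_add_card_add_two_mul_card_le_of_not_violating {A B C : Finset ℕ} {r : ℕ}
    (hA : A.Nonempty) (hB : B.Nonempty) (hC : C.Nonempty) (hAr : ∀ a ∈ A, a ≤ r)
    (h : ∀ a ∈ A, ∀ b ∈ B, ∀ c ∈ C, ¬ ViolatingTriple a b c) :
    #B + #C + 2 * #A ≤ 2 * r + 4 := by
  have hB' := h _ (min'_mem A hA) _ (max'_mem B hB) _ (min'_mem C hC)
  have hC' := h _ (min'_mem A hA) _ (min'_mem B hB) _ (max'_mem C hC)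
  simp only [ViolatingTriple, not_not] at hB' hC'
  have := hAr _ (max'_mem A hA)
  have := card_add_min'_le_max' hA
  have := card_add_min'_le_max' hB
  have := card_add_min'_le_max' hC
  omega

theorem ascendingPairs_univ {α : Type*} [LinearOrder α] [Fintype α] :
    ascendingPairs (univ : Finset α) = univ.filter fun p => p.1 < p.2 := by
  simp [ascendingPairs]

theorem stmt_7_general (r t m : ℕ) (hr : 3 ≤ r) (hm : m = (r + 2) / 2)
    (c : Fin t → Fin t → Finset ℕ)
    (hsymm : ∀ u v, c u v = c v u)
    (hrange : ∀ u v : Fin t, u ≠ v → (c u v).Nonempty ∧ c u v ⊆ Finset.Icc 1 r)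
    (hmetric : ∀ u v w : Fin t, u ≠ v → v ≠ w → u ≠ w →
      ∀ a ∈ c u v, ∀ b ∈ c v w, ∀ x ∈ c u w, ¬ ViolatingTriple a b x) :
    ((∏ p ∈ Finset.univ.filter (fun p : Fin t × Fin t => p.1 < p.2),
        (c p.1 p.2).card : ℕ) : ℝ) ≤
      (m : ℝ) ^ (t.choose 2 + t + 5) *
        (((m : ℝ) ^ 2 - 1) / (m : ℝ) ^ 2) ^
          ((Finset.univ.filter
            (fun p : Fin t × Fin t => p.1 < p.2 ∧ m < (c p.1 p.2).card)).card) := by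
  have hm2 : 2 ≤ m := by omega
  have hmR : (2 : ℝ) ≤ m := by exact_mod_cast hm2
  have hcard : ∀ u v, u ≠ v → #(c u v) ≤ r := fun u v huv => by
    simpa using card_le_card (hrange u v huv).2
  have hpair : ∀ u v w, u ≠ v → u ≠ w → v ≠ w → m < #(c u v) → #(c u w) + #(c v w) ≤ 2 * m :=
    fun u v w huv huw hvw hbig => by
      have := card_add_card_add_two_mul_card_le_of_not_violating (hrange u v huv).1
        (hrange v w hvw).1 (hrange u w huw).1 (fun a ha => (mem_Icc.1 ((hrange u v huv).2 ha)).2)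
        (hmetric u v w huv hvw huw)
      omega
  have hweight := prod_ascendingPairs_le (g := fun u v => weight m #(c u v))
    (fun _ _ => weight_nonneg _ _) (fun u v => by rw [hsymm]) (by linarith)
    (fun u v huv => weight_le_cube hm2 (by have := hcard u v huv; omega))
    (fun u v w huv huw hvw hbig =>
      weight_mul_weight_le hm2 (hpair u v w huv huw hvw (lt_of_lt_weight hbig))) univ
  rw [prod_weight, ascendingPairs_univ, filter_filter, card_univ, Fintype.card_fin] at hweight
  have hq : (0 : ℝ) < (m : ℝ) ^ 2 / ((m : ℝ) ^ 2 - 1) := div_pos (by positivity) (by nlinarith)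
  rw [Nat.cast_prod, ← inv_div, inv_pow, ← div_eq_mul_inv]
  calc _ ≤ (m : ℝ) ^ (t.choose 2 + t) / ((m : ℝ) ^ 2 / ((m : ℝ) ^ 2 - 1)) ^ _ :=
        (le_div_iff₀ (pow_pos hq _)).2 hweight
    _ ≤ _ := by gcongr ?_ / _; exact pow_le_pow_right₀ (by linarith) (by omega)

theorem stmt_7 (r t m : ℕ) (hr : 3 ≤ r) (ht : 3 ≤ t) (hm : m = (r + 2) / 2)
    (c : Fin t → Fin t → Finset ℕ)
    (hsymm : ∀ u v, c u v = c v u)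
    (hrange : ∀ u v : Fin t, u ≠ v → (c u v).Nonempty ∧ c u v ⊆ Finset.Icc 1 r)
    (hmetric : ∀ u v w : Fin t, u ≠ v → v ≠ w → u ≠ w →
      ∀ a ∈ c u v, ∀ b ∈ c v w, ∀ x ∈ c u w, ¬ ViolatingTriple a b x) :
    ((∏ p ∈ Finset.univ.filter (fun p : Fin t × Fin t => p.1 < p.2),
        (c p.1 p.2).card : ℕ) : ℝ) ≤
      (m : ℝ) ^ (t.choose 2 + t + 5) *
        (((m : ℝ) ^ 2 - 1) / (m : ℝ) ^ 2) ^
          ((Finset.univ.filter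
            (fun p : Fin t × Fin t => p.1 < p.2 ∧ m < (c p.1 p.2).card)).card) :=
  stmt_7_general r t m hr hm c hsymm hrange hmetric
end

section
/- Let r ≥ 3 be odd, m = (r+1)/2, n ≥ 4, and let G be a metric space on {1,...,n} with distances in {1,...,r}. Suppose z₁, ..., z_k (k ≥ 3) are distinct points with d(z_i, z_{i+1}) = m − 1 for all 1 ≤ i ≤ k−1 and d(z₁, z_k) = r. Then there is no partition V₁, ..., V_t of {1,...,n} such that d(x,y) ∈ {m−1, ..., r−1} whenever x, y lie in the same part and d(x,y) ∈ {m, ..., r} whenever x, y lie in different parts. -/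
def IsMetricOn (n r : ℕ) (d : Fin n → Fin n → ℕ) : Prop :=
  (∀ x, d x x = 0) ∧ (∀ x y, d x y = d y x) ∧
  (∀ x y, x ≠ y → d x y ∈ Finset.Icc 1 r) ∧
  (∀ x y z, x ≠ y → y ≠ z → x ≠ z → d x z ≤ d x y + d y z)

theorem stmt_12 (r m n k : ℕ) (hr : 3 ≤ r) (hodd : Odd r) (hm : m = (r + 1) / 2)
    (hn : 4 ≤ n) (hk : 3 ≤ k)
    (d : Fin n → Fin n → ℕ) (hmet : IsMetricOn n r d)
    (z : Fin k → Fin n) (hz : Function.Injective z)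
    (hpath : ∀ i, ∀ hi : i + 1 < k, d (z ⟨i, by omega⟩) (z ⟨i + 1, hi⟩) = m - 1)
    (hend : d (z ⟨0, by omega⟩) (z ⟨k - 1, by omega⟩) = r) :
    ¬ ∃ (t : ℕ) (p : Fin n → Fin t), ∀ x y : Fin n, x ≠ y →
      ((p x = p y → d x y ∈ Finset.Icc (m - 1) (r - 1)) ∧
        (p x ≠ p y → d x y ∈ Finset.Icc m r)) := by
  rintro ⟨t, p, hp⟩
  have hm2 : 2 ≤ m := by omega
  have key : ∀ i, ∀ hi : i < k, p (z ⟨i, hi⟩) = p (z ⟨0, by omega⟩) := by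
    intro i
    induction i with
    | zero => intro hi; rfl
    | succ j ih =>
      intro hi
      have hj : j < k := by omega
      have hne : z ⟨j, hj⟩ ≠ z ⟨j + 1, hi⟩ := by
        intro h
        have := hz h
        simp [Fin.mk.injEq] at this
      have hd := hpath j hi
      have hsame : p (z ⟨j, hj⟩) = p (z ⟨j + 1, hi⟩) := by
        by_contra hne2
        have h2 := (hp _ _ hne).2 hne2
        rw [hd, Finset.mem_Icc] at h2
        omega
      rw [← hsame, ih hj]
  have hne : z ⟨0, by omega⟩ ≠ z ⟨k - 1, by omega⟩ := by
    intro h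
    have := hz h
    simp [Fin.mk.injEq] at this
    omega
  have hsame := (key (k - 1) (by omega)).symm
  have hfin := (hp _ _ hne).1 hsame
  rw [hend, Finset.mem_Icc] at hfin
  omega
end

section
/- Let r ≥ 3 be an odd integer and m = (r+1)/2. For every n ≥ 2 and every matching S (a set of pairwise disjoint unordered pairs) on {1,...,n}, every assignment d of distances with d(e) = m − 1 for e ∈ S and d(e) ∈ {m, ..., r} for e ∉ S satisfies the triangle inequality. Consequently the number of metric spaces on {1,...,n} with distances in {1,...,r} is at least (number of matchings of size ⌊n/2⌋) · m^{C(n,2) − ⌊n/2⌋}. -/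
open scoped Classical

/-- `S` is a matching: a set of non-diagonal unordered pairs, pairwise disjoint. -/
def IsMatching (n : ℕ) (S : Finset (Sym2 (Fin n))) : Prop :=
  (∀ e ∈ S, ¬ e.IsDiag) ∧ (∀ e ∈ S, ∀ f ∈ S, e ≠ f → ∀ x : Fin n, x ∈ e → x ∉ f)

lemma part1_aux (r m n : ℕ) (hm2 : 2 ≤ m) (hrm : r = 2 * m - 1) :
    ∀ S : Finset (Sym2 (Fin n)), IsMatching n S →
      ∀ d : Fin n → Fin n → ℕ, (∀ x y, d x y = d y x) →
      (∀ x y : Fin n, x ≠ y →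
        (s(x, y) ∈ S → d x y = m - 1) ∧ (s(x, y) ∉ S → d x y ∈ Finset.Icc m r)) →
      ∀ x y z : Fin n, x ≠ y → y ≠ z → x ≠ z → d x z ≤ d x y + d y z := by
  intro S hS d _hsym hd x y z hxy hyz hxz
  have key : ∀ a b : Fin n, a ≠ b →
      (m - 1 ≤ d a b ∧ d a b ≤ r) ∧ (s(a, b) ∉ S → m ≤ d a b) := by
    intro a b hab
    rcases Classical.em (s(a, b) ∈ S) with h | h
    · refine ⟨⟨?_, ?_⟩, fun hc => absurd h hc⟩
      · rw [(hd a b hab).1 h]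
      · rw [(hd a b hab).1 h]; omega
    · have := (hd a b hab).2 h
      rw [Finset.mem_Icc] at this
      exact ⟨⟨by omega, this.2⟩, fun _ => this.1⟩
  have hone : s(x, y) ∉ S ∨ s(y, z) ∉ S := by
    by_contra hc
    push_neg at hc
    obtain ⟨h1, h2⟩ := hc
    have hne : s(x, y) ≠ s(y, z) := by
      intro he
      rw [Sym2.eq_iff] at he
      tauto
    exact hS.2 _ h1 _ h2 hne y (by simp) (by simp)
  have k1 := key x y hxy
  have k2 := key y z hyz
  have k3 := key x z hxz
  rcases hone with h | h
  · have := k1.2 h; omega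
  · have := k2.2 h; omega

theorem stmt_13 (r m n : ℕ) (hr : 3 ≤ r) (hodd : Odd r) (hm : m = (r + 1) / 2)
    (hn : 2 ≤ n) :
    (∀ S : Finset (Sym2 (Fin n)), IsMatching n S →
      ∀ d : Fin n → Fin n → ℕ, (∀ x y, d x y = d y x) →
      (∀ x y : Fin n, x ≠ y →
        (s(x, y) ∈ S → d x y = m - 1) ∧ (s(x, y) ∉ S → d x y ∈ Finset.Icc m r)) →
      ∀ x y z : Fin n, x ≠ y → y ≠ z → x ≠ z → d x z ≤ d x y + d y z) ∧
    {d : Fin n → Fin n → ℕ | IsMetricOn n r d}.ncard ≥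
      ((Finset.univ : Finset (Finset (Sym2 (Fin n)))).filter
          (fun S => S.card = n / 2 ∧ IsMatching n S)).card *
        m ^ (n.choose 2 - n / 2) := by
  obtain ⟨k, hk⟩ := hodd
  have hm2 : 2 ≤ m := by omega
  have hrm : r = 2 * m - 1 := by omega
  constructor
  · exact part1_aux r m n hm2 hrm
  -- Part 2: the counting bound
  set M : Finset (Finset (Sym2 (Fin n))) :=
    (Finset.univ : Finset (Finset (Sym2 (Fin n)))).filter
      (fun S => S.card = n / 2 ∧ IsMatching n S) with hM
  -- the per-matching function finsets
  set t : Finset (Sym2 (Fin n)) → Sym2 (Fin n) → Finset (Fin m) :=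
    fun S e => if e.IsDiag ∨ e ∈ S then {(⟨0, by omega⟩ : Fin m)} else Finset.univ with ht
  -- the construction
  set Φ : (Σ _ : Finset (Sym2 (Fin n)), (Sym2 (Fin n) → Fin m)) → (Fin n → Fin n → ℕ) :=
    fun p x y => if x = y then 0 else if s(x, y) ∈ p.1 then m - 1 else m + (p.2 s(x, y) : ℕ)
      with hΦ
  set D : Finset (Σ _ : Finset (Sym2 (Fin n)), (Sym2 (Fin n) → Fin m)) :=
    M.sigma (fun S => Fintype.piFinset (t S)) with hD
  set B : Finset (Fin n → Fin n → ℕ) := D.image Φ with hB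
  -- B consists of metrics
  have hBsub : ↑B ⊆ {d : Fin n → Fin n → ℕ | IsMetricOn n r d} := by
    intro d hd
    simp only [hB, Finset.coe_image, Set.mem_image, Finset.mem_coe] at hd
    obtain ⟨⟨S, g⟩, hSg, rfl⟩ := hd
    rw [hD, Finset.mem_sigma] at hSg
    obtain ⟨hSM, hg⟩ := hSg
    rw [hM, Finset.mem_filter] at hSM
    obtain ⟨-, hScard, hSmatch⟩ := hSM
    have hprop : ∀ x y : Fin n, x ≠ y →
        (s(x, y) ∈ S → Φ ⟨S, g⟩ x y = m - 1) ∧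
        (s(x, y) ∉ S → Φ ⟨S, g⟩ x y ∈ Finset.Icc m r) := by
      intro x y hxy
      constructor
      · intro h; simp [hΦ, hxy, h]
      · intro h
        have : (g s(x, y) : ℕ) < m := (g s(x, y)).isLt
        simp only [hΦ, if_neg hxy, if_neg h, Finset.mem_Icc]
        omega
    have hsym : ∀ x y, Φ ⟨S, g⟩ x y = Φ ⟨S, g⟩ y x := by
      intro x y
      simp only [hΦ]
      rcases Classical.em (x = y) with h | h
      · subst h; simp
      · rw [if_neg h, if_neg (Ne.symm h), Sym2.eq_swap]
    refine ⟨fun x => by simp [hΦ], hsym, ?_, ?_⟩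
    · intro x y hxy
      rcases Classical.em (s(x, y) ∈ S) with h | h
      · rw [(hprop x y hxy).1 h, Finset.mem_Icc]; omega
      · have := (hprop x y hxy).2 h
        rw [Finset.mem_Icc] at this ⊢
        omega
    · exact part1_aux r m n hm2 hrm S hSmatch _ hsym hprop
  -- injectivity of Φ on D
  have hinj : Set.InjOn Φ ↑D := by
    intro ⟨S, g⟩ hSg ⟨S', g'⟩ hSg' heq
    rw [hD, Finset.mem_coe, Finset.mem_sigma] at hSg hSg'
    obtain ⟨hSM, hg⟩ := hSg
    obtain ⟨hSM', hg'⟩ := hSg'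
    rw [hM, Finset.mem_filter] at hSM hSM'
    obtain ⟨-, -, hSmatch⟩ := hSM
    obtain ⟨-, -, hSmatch'⟩ := hSM'
    rw [Fintype.mem_piFinset] at hg hg'
    have hval : ∀ x y : Fin n, Φ ⟨S, g⟩ x y = Φ ⟨S', g'⟩ x y := by
      intro x y; rw [heq]
    have hmem : ∀ e : Sym2 (Fin n), e ∈ S ↔ e ∈ S' := by
      intro e
      induction e using Sym2.ind with
      | _ x y =>
        constructor
        · intro h
          have hxy : x ≠ y := by
            intro hc; exact hSmatch.1 _ h (by simp [hc])
          by_contra h'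
          have := hval x y
          simp only [hΦ, if_neg hxy, if_pos h, if_neg h'] at this
          omega
        · intro h
          have hxy : x ≠ y := by
            intro hc; exact hSmatch'.1 _ h (by simp [hc])
          by_contra h'
          have := hval x y
          simp only [hΦ, if_neg hxy, if_neg h', if_pos h] at this
          omega
    have hS : S = S' := Finset.ext hmem
    subst hS
    have hgg : g = g' := by
      funext e
      induction e using Sym2.ind with
      | _ x y =>
        rcases Classical.em (x = y) with h | h
        · subst h
          have h1 := hg s(x, x)
          have h2 := hg' s(x, x)
          have hdg : (s(x, x) : Sym2 (Fin n)).IsDiag := by simp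
          simp only [ht, if_pos (Or.inl hdg), Finset.mem_singleton] at h1 h2
          rw [h1, h2]
        · rcases Classical.em (s(x, y) ∈ S) with hs | hs
          · have h1 := hg s(x, y)
            have h2 := hg' s(x, y)
            simp only [ht, if_pos (Or.inr hs), Finset.mem_singleton] at h1 h2
            rw [h1, h2]
          · have := hval x y
            simp only [hΦ, if_neg h, if_neg hs] at this
            exact Fin.ext (by omega)
    rw [hgg]
  -- card of D
  have hDcard : D.card = M.card * m ^ (n.choose 2 - n / 2) := by
    rw [hD, Finset.card_sigma]
    rw [Finset.sum_congr rfl (fun S hS => ?_), Finset.sum_const, smul_eq_mul]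
    rw [hM, Finset.mem_filter] at hS
    obtain ⟨-, hScard, hSmatch⟩ := hS
    rw [Fintype.card_piFinset]
    have : ∀ e : Sym2 (Fin n), (t S e).card =
        if e.IsDiag ∨ e ∈ S then 1 else m := by
      intro e
      rcases Classical.em (e.IsDiag ∨ e ∈ S) with h | h
      · simp [ht, h]
      · simp [ht, h]
    rw [Finset.prod_congr rfl (fun e _ => this e)]
    rw [Finset.prod_ite, Finset.prod_const, Finset.prod_const, one_pow, one_mul]
    congr 1
    have hcomp : Finset.univ.filter (fun e : Sym2 (Fin n) => ¬(e.IsDiag ∨ e ∈ S)) =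
        (Finset.univ.filter (fun e : Sym2 (Fin n) => ¬ e.IsDiag)) \ S := by
      ext e
      simp only [Finset.mem_filter, Finset.mem_univ, true_and, Finset.mem_sdiff]
      tauto
    rw [hcomp, Finset.card_sdiff_of_subset]
    · congr 1
      · rw [← Fintype.card_subtype, Sym2.card_subtype_not_diag]
        simp
    · intro e he
      simp only [Finset.mem_filter, Finset.mem_univ, true_and]
      exact hSmatch.1 e he
  -- conclude
  have hfin : {d : Fin n → Fin n → ℕ | IsMetricOn n r d}.Finite := by
    apply Set.Finite.subset (Finset.finite_toSet
      (Fintype.piFinset (fun _ : Fin n => Fintype.piFinset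
        (fun _ : Fin n => Finset.range (r + 1)))))
    intro d hd
    obtain ⟨hdiag, -, hrange, -⟩ := hd
    simp only [Finset.mem_coe, Fintype.mem_piFinset, Finset.mem_range]
    intro x y
    rcases Classical.em (x = y) with h | h
    · subst h; rw [hdiag]; omega
    · have := hrange x y h
      rw [Finset.mem_Icc] at this
      omega
  have hBcard : B.card = M.card * m ^ (n.choose 2 - n / 2) := by
    rw [hB, Finset.card_image_of_injOn hinj, hDcard]
  calc M.card * m ^ (n.choose 2 - n / 2) = B.card := hBcard.symm
    _ = (↑B : Set (Fin n → Fin n → ℕ)).ncard := (Set.ncard_coe_finset B).symm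
    _ ≤ _ := Set.ncard_le_ncard hBsub hfin
end

section
/- Let r ≥ 3 be odd, set m = (r+1)/2. Suppose A, B, C ⊆ {1,...,r} are nonempty sets with no violating triple in A × B × C and |A| = |B| = |C| = m, and suppose r ∈ A. Then B ⊆ {m−1, ..., r} and C ⊆ {m−1, ..., r}, and at most one of B, C contains m − 1. -/
theorem stmt_15 (r m : ℕ) (hr : 3 ≤ r) (hodd : Odd r) (hm : m = (r + 1) / 2)
    (A B C : Finset ℕ)
    (hA : A ⊆ Finset.Icc 1 r) (hB : B ⊆ Finset.Icc 1 r) (hC : C ⊆ Finset.Icc 1 r)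
    (hAne : A.Nonempty) (hBne : B.Nonempty) (hCne : C.Nonempty)
    (hfree : ∀ a ∈ A, ∀ b ∈ B, ∀ c ∈ C, ¬ ViolatingTriple a b c)
    (hcard : A.card = m ∧ B.card = m ∧ C.card = m)
    (hrA : r ∈ A) :
    B ⊆ Finset.Icc (m - 1) r ∧ C ⊆ Finset.Icc (m - 1) r ∧
      ¬ ((m - 1) ∈ B ∧ (m - 1) ∈ C) := by
  obtain ⟨k, hk⟩ := hodd
  have hrm : r = 2 * m - 1 := by omega
  have hm2 : 2 ≤ m := by omega
  obtain ⟨hcA, hcB, hcC⟩ := hcard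
  have key : ∀ b ∈ B, ∀ c ∈ C, r ≤ b + c := by
    intro b hb c hc
    have := hfree r hrA b hb c hc
    unfold ViolatingTriple at this
    by_contra h
    exact this (fun ⟨h1, _, _⟩ => h h1)
  -- if some b ∈ B with b ≤ m - 2, then C ⊆ Icc (m+1) r, too small
  have hBsub : B ⊆ Finset.Icc (m - 1) r := by
    intro b hb
    have hbr := Finset.mem_Icc.mp (hB hb)
    rw [Finset.mem_Icc]
    refine ⟨?_, hbr.2⟩
    by_contra h
    have hsub : C ⊆ Finset.Icc (m + 1) r := by
      intro c hc
      have := key b hb c hc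
      have hcr := Finset.mem_Icc.mp (hC hc)
      rw [Finset.mem_Icc]; omega
    have := Finset.card_le_card hsub
    rw [Nat.card_Icc] at this
    omega
  have hCsub : C ⊆ Finset.Icc (m - 1) r := by
    intro c hc
    have hcr := Finset.mem_Icc.mp (hC hc)
    rw [Finset.mem_Icc]
    refine ⟨?_, hcr.2⟩
    by_contra h
    have hsub : B ⊆ Finset.Icc (m + 1) r := by
      intro b hb
      have := key b hb c hc
      have hbr := Finset.mem_Icc.mp (hB hb)
      rw [Finset.mem_Icc]; omega
    have := Finset.card_le_card hsub
    rw [Nat.card_Icc] at this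
    omega
  refine ⟨hBsub, hCsub, ?_⟩
  rintro ⟨hb, hc⟩
  have := key _ hb _ hc
  omega
end

section
/- Let r ≥ 3 and m = ⌈(r+1)/2⌉. If A, B ⊆ {1,...,r} satisfy |A| = |B| = m and no triple in A × B × B is violating (taking the third coordinate also from B), and r is even, then A = B = {m−1, ..., r}. -/
theorem stmt_19 (r m : ℕ) (hr : 3 ≤ r) (heven : Even r) (hm : m = (r + 2) / 2)
    (A B : Finset ℕ) (hA : A ⊆ Finset.Icc 1 r) (hB : B ⊆ Finset.Icc 1 r)
    (hAcard : A.card = m) (hBcard : B.card = m)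
    (hfree : ∀ a ∈ A, ∀ b ∈ B, ∀ c ∈ B, ¬ ViolatingTriple a b c) :
    A = Finset.Icc (m - 1) r ∧ B = Finset.Icc (m - 1) r := by
  obtain ⟨t, ht⟩ := heven
  have hrm : r = 2 * m - 2 := by omega
  have hm2 : 2 ≤ m := by omega
  have hAne : A.Nonempty := Finset.card_pos.mp (by omega)
  have hBne : B.Nonempty := Finset.card_pos.mp (by omega)
  set a0 := A.min' hAne with ha0def
  set b0 := B.min' hBne with hb0def
  have ha0 : a0 ∈ A := A.min'_mem hAne
  have hb0 : b0 ∈ B := B.min'_mem hBne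
  have hBsub : B ⊆ Finset.Icc b0 (a0 + b0) := by
    intro b hb
    have h1 := B.min'_le b hb
    have h2 := hfree a0 ha0 b hb b0 hb0
    simp only [ViolatingTriple, not_not] at h2
    exact Finset.mem_Icc.mpr ⟨h1, by omega⟩
  have hcard := Finset.card_le_card hBsub
  rw [hBcard, Nat.card_Icc] at hcard
  have ha0ge : m - 1 ≤ a0 := by omega
  have hAsub : A ⊆ Finset.Icc (m - 1) r := by
    intro a ha
    have h1 := A.min'_le a ha
    have h2 := Finset.mem_Icc.mp (hA ha)
    exact Finset.mem_Icc.mpr ⟨by omega, h2.2⟩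
  have hIcc_card : (Finset.Icc (m - 1) r).card = m := by
    rw [Nat.card_Icc]; omega
  have hAeq : A = Finset.Icc (m - 1) r :=
    Finset.eq_of_subset_of_card_le hAsub (by rw [hIcc_card, hAcard])
  have hrA : r ∈ A := by
    rw [hAeq]; exact Finset.mem_Icc.mpr ⟨by omega, le_refl r⟩
  have h3 := hfree r hrA b0 hb0 b0 hb0
  simp only [ViolatingTriple, not_not] at h3
  have hb0ge : m - 1 ≤ b0 := by omega
  have hBsub2 : B ⊆ Finset.Icc (m - 1) r := by
    intro b hb
    have h1 := B.min'_le b hb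
    have h2 := Finset.mem_Icc.mp (hB hb)
    exact Finset.mem_Icc.mpr ⟨by omega, h2.2⟩
  exact ⟨hAeq, Finset.eq_of_subset_of_card_le hBsub2 (by rw [hIcc_card, hBcard])⟩
end
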